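/- arXiv:2303.00570 — 2 statements merged into one kernel-verified Lean document; each statement's English description precedes it below -/
import Mathlib

section
/- Let d ≥ 1 be an integer and 0 < β ≤ d. Let V : ℝ^d → (0,∞) be twice continuously differentiable, α-strongly convex (∇²V(x) ⪰ α I_d for all x, α > 0), and satisfy |∇V(x)|² ≤ α C_V V(x) for all x ∈ ℝ^d, where C_V ∈ (0, (d+2)/(d+2−β)). Then there exist γ ∈ (0, β/(d+2)] and a constant c > 0 such that V(x)^{1−γ} ∇²(V^γ)(x) ⪰ c·I_d for all x ∈ ℝ^d; in particular ∇²(V^γ)(x) is invertible for every x and sup_{x∈ℝ^d} ‖V(x)^{γ−1}(∇²(V^γ))^{-1}(x)‖₂ ≤ c^{-1}. -/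
/-!
For `W = V ^ γ` the chain rule gives `V ^ (1 - γ) ∇²W = γ (∇²V - (1 - γ) V⁻¹ ∇V ∇Vᵀ)`.
Since `∇V ∇Vᵀ ⪯ |∇V|² I ⪯ α C_V V I`, strong convexity leaves
`V ^ (1 - γ) ∇²W ⪰ γ α (1 - (1 - γ) C_V) I`, and for `γ = β / (d + 2)` this constant is positive
precisely because `C_V < (d + 2) / (d + 2 - β)`. A matrix `A ⪰ c I` with `c > 0` is positive
definite, and `c ‖A⁻¹ v‖² ≤ ⟪A⁻¹ v, v⟫ ≤ ‖A⁻¹ v‖ ‖v‖` bounds its inverse by `c⁻¹`.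
-/

open MeasureTheory Real Matrix

/-- The Hessian matrix of `f : ℝ^d → ℝ` at `x`. -/
noncomputable def hessianMatrix {d : ℕ} (f : EuclideanSpace ℝ (Fin d) → ℝ)
    (x : EuclideanSpace ℝ (Fin d)) : Matrix (Fin d) (Fin d) ℝ :=
  Matrix.of fun i j =>
    iteratedFDeriv ℝ 2 f x ![EuclideanSpace.single i 1, EuclideanSpace.single j 1]

theorem fderiv_fderiv_rpow_const {E : Type*} [NormedAddCommGroup E] [NormedSpace ℝ E]
    {f : E → ℝ} (hf : ContDiff ℝ 2 f) (hpos : ∀ y, 0 < f y) (γ : ℝ) (x : E) :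
    fderiv ℝ (fderiv ℝ fun y => f y ^ γ) x =
      (γ * f x ^ (γ - 1)) • fderiv ℝ (fderiv ℝ f) x +
        ((γ * (γ - 1) * f x ^ (γ - 2)) • fderiv ℝ f x).smulRight (fderiv ℝ f x) := by
  have hf' : Differentiable ℝ f := hf.differentiable (by norm_num)
  have hff' : Differentiable ℝ (fderiv ℝ f) :=
    (hf.fderiv_right (m := 1) le_rfl).differentiable one_ne_zero
  have hfderiv : (fderiv ℝ fun y => f y ^ γ) = fun y => (γ * f y ^ (γ - 1)) • fderiv ℝ f y :=
    funext fun y => ((hf' y).hasFDerivAt.rpow_const (Or.inl (hpos y).ne')).fderiv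
  have hcoeff : HasFDerivAt (fun y => γ * f y ^ (γ - 1))
      ((γ * (γ - 1) * f x ^ (γ - 2)) • fderiv ℝ f x) x := by
    have h := ((hf' x).hasFDerivAt.rpow_const (p := γ - 1) (Or.inl (hpos x).ne')).const_mul γ
    rwa [smul_smul, show γ * ((γ - 1) * f x ^ (γ - 1 - 1)) = γ * (γ - 1) * f x ^ (γ - 2) by
      ring_nf] at h
  rw [hfderiv]
  exact (hcoeff.smul (hff' x).hasFDerivAt).fderiv

theorem fderiv_apply_single_eq_gradient {ι : Type*} [Fintype ι] [DecidableEq ι]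
    (f : EuclideanSpace ℝ ι → ℝ) (x : EuclideanSpace ℝ ι) (i : ι) :
    fderiv ℝ f x (EuclideanSpace.single i 1) = gradient f x i := by
  rw [← inner_gradient_left, EuclideanSpace.inner_single_right]
  simp

theorem hessianMatrix_apply_eq_fderiv {d : ℕ} (f : EuclideanSpace ℝ (Fin d) → ℝ)
    (x : EuclideanSpace ℝ (Fin d)) (i j : Fin d) :
    hessianMatrix f x i j =
      fderiv ℝ (fderiv ℝ f) x (EuclideanSpace.single i 1) (EuclideanSpace.single j 1) := by
  simp [hessianMatrix, iteratedFDeriv_two_apply]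

theorem hessianMatrix_rpow_const {d : ℕ} {f : EuclideanSpace ℝ (Fin d) → ℝ}
    (hf : ContDiff ℝ 2 f) (hpos : ∀ y, 0 < f y) (γ : ℝ) (x : EuclideanSpace ℝ (Fin d)) :
    hessianMatrix (fun y => f y ^ γ) x =
      (γ * f x ^ (γ - 1)) • (hessianMatrix f x -
        ((1 - γ) / f x) • vecMulVec (gradient f x).ofLp (gradient f x).ofLp) := by
  have hrpow : f x ^ (γ - 2) = f x ^ (γ - 1) / f x := by
    rw [← Real.rpow_sub_one (hpos x).ne']; ring_nf
  ext i j
  simp only [hessianMatrix_apply_eq_fderiv, fderiv_fderiv_rpow_const hf hpos, hrpow,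
    _root_.add_apply, _root_.smul_apply, ContinuousLinearMap.smulRight_apply,
    fderiv_apply_single_eq_gradient, smul_eq_mul, Matrix.smul_apply, Matrix.sub_apply,
    vecMulVec_apply]
  field_simp
  ring

theorem mul_norm_le_norm_of_mul_norm_sq_le_inner {E : Type*} [NormedAddCommGroup E]
    [InnerProductSpace ℝ E] {c : ℝ} {w v : E} (h : c * ‖w‖ ^ 2 ≤ inner ℝ w v) :
    c * ‖w‖ ≤ ‖v‖ := by
  rcases (norm_nonneg w).eq_or_lt with hw | hw
  · simp [← hw]
  · refine le_of_mul_le_mul_left ?_ hw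
    nlinarith [real_inner_le_norm w v]

namespace Matrix

theorem PosSemidef.posDef_of_sub_smul_one {n : Type*} [DecidableEq n] {A : Matrix n n ℝ}
    {c : ℝ} (hA : (A - c • 1).PosSemidef) (hc : 0 < c) : A.PosDef := by
  simpa using PosDef.posSemidef_add hA (PosDef.one.smul hc)

section

variable {n : Type*} [Fintype n] [DecidableEq n]

theorem posSemidef_dotProduct_self_smul_one_sub_vecMulVec (g : n → ℝ) :
    ((g ⬝ᵥ g) • (1 : Matrix n n ℝ) - vecMulVec g g).PosSemidef := by
  refine .of_dotProduct_mulVec_nonneg ?_ fun v => ?_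
  · exact ((PosSemidef.one.smul (dotProduct_self_star_nonneg g)).isHermitian).sub
      (by simpa using (posSemidef_vecMulVec_self_star g).isHermitian)
  · have hCS := real_inner_mul_inner_self_le (WithLp.toLp 2 g) (WithLp.toLp 2 v)
    simp only [EuclideanSpace.inner_toLp_toLp, star_trivial] at hCS
    simp only [star_trivial, sub_mulVec, smul_mulVec, one_mulVec, vecMulVec_mulVec,
      dotProduct_sub, dotProduct_smul, smul_eq_mul, op_smul_eq_mul, dotProduct_comm g v]
    linarith

theorem PosSemidef.sub_smul_vecMulVec_sub_smul_one {H : Matrix n n ℝ} {α s b : ℝ} (g : n → ℝ)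
    (hH : (H - α • 1).PosSemidef) (hs : 0 ≤ s) (hb : b + s * (g ⬝ᵥ g) ≤ α) :
    (H - s • vecMulVec g g - b • 1).PosSemidef := by
  have hsplit : H - s • vecMulVec g g - b • 1 = (H - α • 1) +
      s • ((g ⬝ᵥ g) • 1 - vecMulVec g g) + (α - b - s * (g ⬝ᵥ g)) • 1 := by
    module
  rw [hsplit]
  exact (hH.add ((posSemidef_dotProduct_self_smul_one_sub_vecMulVec g).smul hs)).add
    (PosSemidef.one.smul (by linarith))

theorem PosSemidef.norm_toEuclideanLin_inv_le {A : Matrix n n ℝ} {c : ℝ}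
    (hA : (A - c • 1).PosSemidef) (hc : 0 < c) (v : EuclideanSpace ℝ n) :
    ‖toEuclideanLin A⁻¹ v‖ ≤ c⁻¹ * ‖v‖ := by
  set w := toEuclideanLin A⁻¹ v
  have hAw : toEuclideanLin A w = v := by
    have hdet : IsUnit A.det :=
      (isUnit_iff_isUnit_det A).mp (hA.posDef_of_sub_smul_one hc).isUnit
    simp only [w, toLpLin_apply, mulVec_mulVec, mul_nonsing_inv A hdet,
      one_mulVec, WithLp.toLp_ofLp]
  have hinner : c * ‖w‖ ^ 2 ≤ inner ℝ w v := by
    have := (isPositive_toEuclideanLin_iff.mpr hA).inner_nonneg_right w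
    simp only [map_sub, map_smul, toLpLin_one, LinearMap.sub_apply, hAw, LinearMap.smul_apply,
      LinearMap.id_coe, id_eq, inner_sub_right, real_inner_smul_right,
      real_inner_self_eq_norm_sq] at this
    linarith
  rw [le_inv_mul_iff₀ hc]
  exact mul_norm_le_norm_of_mul_norm_sq_le_inner hinner

end

end Matrix

theorem EuclideanSpace.ofLp_dotProduct_ofLp_self {n : Type*} [Fintype n]
    (x : EuclideanSpace ℝ n) :
    x.ofLp ⬝ᵥ x.ofLp = ‖x‖ ^ 2 := by
  rw [← real_inner_self_eq_norm_sq, EuclideanSpace.inner_eq_star_dotProduct, star_trivial]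

theorem posSemidef_rpow_smul_hessianMatrix_rpow_sub {d : ℕ} {V : EuclideanSpace ℝ (Fin d) → ℝ}
    (hV : ContDiff ℝ 2 V) (hVpos : ∀ x, 0 < V x) {α CV γ : ℝ} (hγ0 : 0 ≤ γ) (hγ1 : γ ≤ 1)
    {x : EuclideanSpace ℝ (Fin d)} (hstrong : (hessianMatrix V x - α • 1).PosSemidef)
    (hCV : ‖gradient V x‖ ^ 2 ≤ α * CV * V x) :
    (V x ^ (1 - γ) • hessianMatrix (fun y => V y ^ γ) x -
      (γ * (α * (1 - (1 - γ) * CV))) • 1).PosSemidef := by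
  have hVx := hVpos x
  have hscale : V x ^ (1 - γ) * (γ * V x ^ (γ - 1)) = γ := by
    rw [mul_left_comm, ← rpow_add hVx]; simp
  have hgrad : (1 - γ) / V x * ‖gradient V x‖ ^ 2 ≤ (1 - γ) * α * CV := by
    rw [div_mul_eq_mul_div, div_le_iff₀ hVx]
    nlinarith
  rw [hessianMatrix_rpow_const hV hVpos, smul_smul, hscale, mul_smul, ← smul_sub]
  refine PosSemidef.smul ?_ hγ0
  refine hstrong.sub_smul_vecMulVec_sub_smul_one _ (div_nonneg (by linarith) hVx.le) ?_
  rw [EuclideanSpace.ofLp_dotProduct_ofLp_self]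
  linarith

theorem assumption_strongly_convex_implies_small_beta_general
    (d : ℕ) (β : ℝ) (hβ0 : 0 < β) (hβd : β ≤ d)
    (V : EuclideanSpace ℝ (Fin d) → ℝ)
    (hV : ContDiff ℝ 2 V) (hVpos : ∀ x, 0 < V x)
    (α : ℝ) (hα : 0 < α)
    (hstrong : ∀ x, (hessianMatrix V x - α • 1).PosSemidef)
    (CV : ℝ) (hCVub : CV < ((d : ℝ) + 2) / ((d : ℝ) + 2 - β))
    (hCV : ∀ x, ‖gradient V x‖ ^ 2 ≤ α * CV * V x) :
    ∃ γ : ℝ, 0 < γ ∧ γ ≤ β / (d + 2) ∧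
      ∃ c : ℝ, 0 < c ∧ ∀ x,
        (V x ^ (1 - γ) • hessianMatrix (fun y => V y ^ γ) x - c • 1).PosSemidef ∧
        IsUnit (hessianMatrix (fun y => V y ^ γ) x) ∧
        ∀ v : EuclideanSpace ℝ (Fin d),
          ‖Matrix.toEuclideanLin
              (V x ^ (γ - 1) • (hessianMatrix (fun y => V y ^ γ) x)⁻¹) v‖ ≤ c⁻¹ * ‖v‖ := by
  have hd2 : (0 : ℝ) < d + 2 := by positivity
  set γ := β / (d + 2)
  have hγ0 : 0 < γ := div_pos hβ0 hd2
  have hγ1 : γ < 1 := (div_lt_one hd2).mpr (by linarith)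
  have hCVγ : (1 - γ) * CV < 1 := by
    have h1γ : 1 - γ = (d + 2 - β) / (d + 2) := by
      rw [eq_div_iff hd2.ne', sub_mul, div_mul_cancel₀ _ hd2.ne']
      ring
    rw [h1γ, div_mul_eq_mul_div, div_lt_one hd2, mul_comm]
    exact (lt_div_iff₀ (by linarith)).mp hCVub
  have hc : 0 < γ * (α * (1 - (1 - γ) * CV)) := by
    have := sub_pos.mpr hCVγ
    positivity
  refine ⟨γ, hγ0, le_rfl, _, hc, fun x => ?_⟩
  set W := hessianMatrix (fun y => V y ^ γ) x
  have hk : 0 < V x ^ (1 - γ) := rpow_pos_of_pos (hVpos x) _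
  have hA :=
    posSemidef_rpow_smul_hessianMatrix_rpow_sub hV hVpos hγ0.le hγ1.le (hstrong x) (hCV x)
  have hW : W.PosDef := by
    simpa [hk.ne'] using (hA.posDef_of_sub_smul_one hc).smul (inv_pos.mpr hk)
  have hinv : V x ^ (γ - 1) • W⁻¹ = (V x ^ (1 - γ) • W)⁻¹ := by
    refine (inv_eq_left_inv ?_).symm
    rw [smul_mul_smul, nonsing_inv_mul W ((isUnit_iff_isUnit_det W).mp hW.isUnit),
      ← rpow_add (hVpos x)]
    simp
  exact ⟨hA, hW.isUnit, fun v => hinv ▸ hA.norm_toEuclideanLin_inv_le hc v⟩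

/-- If `0 < β ≤ d`, `V` is `α`-strongly convex and `|∇V|² ≤ α C_V V` with
`C_V ∈ (0, (d+2)/(d+2−β))`, then there are `γ ∈ (0, β/(d+2)]` and `c > 0` with
`V^{1−γ} ∇²(V^γ) ⪰ c I`; in particular `∇²(V^γ)` is invertible and
`‖V^{γ−1} (∇²(V^γ))⁻¹‖₂ ≤ c⁻¹` everywhere. -/
theorem assumption_strongly_convex_implies_small_beta
    (d : ℕ) (hd : 1 ≤ d) (β : ℝ) (hβ0 : 0 < β) (hβd : β ≤ d)
    (V : EuclideanSpace ℝ (Fin d) → ℝ)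
    (hV : ContDiff ℝ 2 V) (hVpos : ∀ x, 0 < V x)
    (α : ℝ) (hα : 0 < α)
    (hstrong : ∀ x, (hessianMatrix V x - α • 1).PosSemidef)
    (CV : ℝ) (hCV0 : 0 < CV) (hCVub : CV < ((d : ℝ) + 2) / ((d : ℝ) + 2 - β))
    (hCV : ∀ x, ‖gradient V x‖ ^ 2 ≤ α * CV * V x) :
    ∃ γ : ℝ, 0 < γ ∧ γ ≤ β / (d + 2) ∧
      ∃ c : ℝ, 0 < c ∧ ∀ x,
        (V x ^ (1 - γ) • hessianMatrix (fun y => V y ^ γ) x - c • 1).PosSemidef ∧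
        IsUnit (hessianMatrix (fun y => V y ^ γ) x) ∧
        ∀ v : EuclideanSpace ℝ (Fin d),
          ‖Matrix.toEuclideanLin
              (V x ^ (γ - 1) • (hessianMatrix (fun y => V y ^ γ) x)⁻¹) v‖ ≤ c⁻¹ * ‖v‖ :=
  assumption_strongly_convex_implies_small_beta_general d β hβ0 hβd V hV hVpos α hα hstrong CV hCVub
    hCV
end

section
/- Let d ≥ 1 be an integer, β > d/2 + 1, and let V ∈ C²(ℝ^d) be positive, α-strongly convex (∇²V ⪰ α I_d, α > 0) and L-gradient Lipschitz (∇²V ⪯ L I_d). Then ∫_{ℝ^d} |∇V(x)|² V(x)^{-β} dx = (β−1)^{-1} ∫_{ℝ^d} ΔV(x) · V(x)^{-(β−1)} dx, and consequently ∫_{ℝ^d} |∇V(x)|² π_β(x) dx ≤ (dL/(β−1)) · ∫_{ℝ^d} V(x) π_β(x) dx. -/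
open MeasureTheory Real Matrix

/-!
Integrating `∂ᵢ(∂ᵢV · V^{1-β}) = ∂ᵢᵢV · V^{1-β} - (β - 1) (∂ᵢV)² V^{-β}` over `ℝ^d` and summing
over `i` gives the identity once the boundary terms vanish. Strong convexity makes `V` grow
quadratically, so `V^{1-β}` is integrable exactly because `β > d/2 + 1`; the upper Hessian bound
gives `(∂ᵢV)² ≤ 2LV`, which dominates the integrands by multiples of `V^{1-β}` and makes
`∂ᵢV · V^{1-β} = O(V^{3/2-β})` vanish at infinity. That product need not be integrable for
`β ≤ d/2 + 3/2`, so the boundary terms are taken as limits along lines rather than by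
integration by parts against integrable functions. The bound then follows from `ΔV = tr ∇²V ≤ dL`.
-/

open Filter Topology Set Laplacian InnerProductSpace

theorem integral_eq_zero_of_hasDerivAt_of_tendsto_cocompact {f f' : ℝ → ℝ}
    (hf : ∀ t, HasDerivAt f (f' t) t) (hf' : Integrable f')
    (hlim : Tendsto f (cocompact ℝ) (𝓝 0)) :
    ∫ t, f' t = 0 := by
  rw [cocompact_eq_atBot_atTop] at hlim
  simpa using integral_of_hasDerivAt_of_tendsto hf hf'
    (hlim.mono_left le_sup_left) (hlim.mono_left le_sup_right)

theorem tendsto_prodMk_cocompact {X Y : Type*} [TopologicalSpace X] [TopologicalSpace Y] (x : X) :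
    Tendsto (Prod.mk x) (cocompact Y) (cocompact (X × Y)) :=
  (tendsto_comap_iff.2 (show Tendsto (Prod.snd ∘ Prod.mk x) _ _ from tendsto_id)).mono_right
    (le_sup_right.trans_eq coprod_cocompact)

theorem integral_prod_eq_zero_of_hasLineDerivAt {E : Type*} [AddCommGroup E] [Module ℝ E]
    [MeasurableSpace E] {μ : Measure E} [SFinite μ] {f f' : E × ℝ → ℝ}
    (hf : ∀ z, HasLineDerivAt ℝ f (f' z) z (0, 1)) (hf' : Integrable f' (μ.prod volume))
    (hlim : ∀ x, Tendsto (fun t ↦ f (x, t)) (cocompact ℝ) (𝓝 0)) :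
    ∫ z, f' z ∂μ.prod volume = 0 := by
  rw [integral_prod _ hf']
  refine integral_eq_zero_of_ae ?_
  filter_upwards [hf'.prod_right_ae] with x hx
  refine integral_eq_zero_of_hasDerivAt_of_tendsto_cocompact (fun t ↦ ?_) hx (hlim x)
  simpa [Function.comp_def] using (hf (x, t)).scomp_of_eq t
    ((hasDerivAt_id t).add_const (-t)) (by simp)

theorem integral_eq_zero_of_hasLineDerivAt_of_tendsto_cocompact {E : Type*}
    [NormedAddCommGroup E] [NormedSpace ℝ E] [MeasurableSpace E] [BorelSpace E]
    [FiniteDimensional ℝ E] (μ : Measure E) [μ.IsAddHaarMeasure] {f f' : E → ℝ} {v : E}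
    (hf : ∀ x, HasLineDerivAt ℝ f (f' x) x v) (hf' : Integrable f' μ)
    (hlim : Tendsto f (cocompact E) (𝓝 0)) :
    ∫ x, f' x ∂μ = 0 := by
  rcases eq_or_ne v 0 with rfl | hv
  · simp [fun x ↦ (hf x).unique hasLineDerivAt_zero]
  have : Nontrivial E := nontrivial_iff.2 ⟨v, 0, hv⟩
  let F := Fin (Module.finrank ℝ E - 1) → ℝ
  obtain ⟨e, he⟩ : ∃ e : E ≃L[ℝ] F × ℝ, e v = (0, 1) := by
    have hdim : Module.finrank ℝ (F × ℝ) = Module.finrank ℝ E := by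
      simpa [F] using Nat.sub_add_cancel Module.finrank_pos
    let e₀ : E ≃L[ℝ] F × ℝ := (ContinuousLinearEquiv.ofFinrankEq hdim).symm
    obtain ⟨g, hg⟩ : ∃ g : (F × ℝ) ≃L[ℝ] F × ℝ, g (e₀ v) = (0, 1) :=
      SeparatingDual.exists_continuousLinearEquiv_apply_eq (by simpa using hv) (by simp)
    exact ⟨e₀.trans g, by simp [hg]⟩
  have he_emb : MeasurableEmbedding e := e.toHomeomorph.measurableEmbedding
  -- Uniqueness of Haar measure on `F × ℝ` turns `μ` into a product measure, up to a factor.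
  set ν : Measure (F × ℝ) := (volume : Measure F).prod volume
  have hν : ν = (Measure.addHaarScalarFactor ν (μ.map e)) • μ.map e :=
    Measure.isAddLeftInvariant_eq_smul _ _
  have hν₀ := (Measure.addHaarScalarFactor_pos_of_isAddHaarMeasure ν (μ.map e)).ne'
  have hint : Integrable (f' ∘ e.symm) ν := by
    rw [hν]
    refine Integrable.smul_measure_nnreal ?_
    simpa [he_emb.integrable_map_iff, Function.comp_def] using hf'
  have hzero : ∫ z, (f' ∘ e.symm) z ∂ν = 0 :=
    integral_prod_eq_zero_of_hasLineDerivAt (f := f ∘ e.symm) (fun z ↦ ?_) hint fun x ↦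
      hlim.comp (e.symm.toHomeomorph.isClosedEmbedding.tendsto_cocompact.comp
        (tendsto_prodMk_cocompact x))
  · rw [hν, integral_smul_nnreal_measure, he_emb.integral_map, smul_eq_zero] at hzero
    simpa [hν₀, Function.comp_def] using hzero
  · have hcomp : f = (f ∘ e.symm) ∘ (e : E →ₗ[ℝ] F × ℝ) := by ext; simp
    have hz := hf (e.symm z)
    rw [hcomp] at hz
    convert hz.of_comp using 1 <;> simp [he]

theorem le_add_deriv_add_half_of_deriv_le {g g' g'' : ℝ → ℝ} {C : ℝ}
    (hg : ∀ t, HasDerivAt g (g' t) t) (hg' : ∀ t, HasDerivAt g' (g'' t) t)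
    (hC : ∀ t, g'' t ≤ C) :
    g 1 ≤ g 0 + g' 0 + C / 2 := by
  -- `g - C t² / 2` is concave, so its chord over `[0, 1]` lies below its tangent at `0`.
  have hF : ∀ t, HasDerivAt (fun t ↦ g t - C / 2 * t ^ 2) (g' t - C * t) t := fun t ↦
    ((hg t).fun_sub ((hasDerivAt_pow 2 t).const_mul (C / 2))).congr_deriv (by norm_num; ring)
  have hF' : ∀ t, HasDerivAt (fun t ↦ g' t - C * t) (g'' t - C) t := fun t ↦ by
    simpa using (hg' t).fun_sub ((hasDerivAt_id t).const_mul C)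
  have hderiv : deriv (fun t ↦ g t - C / 2 * t ^ 2) = fun t ↦ g' t - C * t :=
    funext fun t ↦ (hF t).deriv
  have hconc : ConcaveOn ℝ univ (fun t ↦ g t - C / 2 * t ^ 2) := by
    refine concaveOn_univ_of_deriv2_nonpos (fun t ↦ (hF t).differentiableAt) ?_ fun t ↦ ?_
    · rw [hderiv]; exact fun t ↦ (hF' t).differentiableAt
    · rw [Function.iterate_succ_apply, Function.iterate_one, hderiv, (hF' t).deriv]
      linarith [hC t]
  have := hconc.slope_le_of_hasDerivAt (mem_univ 0) (mem_univ 1) one_pos (hF 0)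
  simp only [slope_def_field, one_pow, mul_one, ne_eq, OfNat.ofNat_ne_zero, not_false_eq_true,
    zero_pow, mul_zero, sub_zero, div_one, tsub_le_iff_right] at this
  linarith

section Taylor

variable {E F : Type*} [NormedAddCommGroup E] [NormedSpace ℝ E]
  [NormedAddCommGroup F] [NormedSpace ℝ F]

theorem hasDerivAt_apply_add_smul {f : E → F} (hf : Differentiable ℝ f) (x u : E) (t : ℝ) :
    HasDerivAt (fun s : ℝ ↦ f (x + s • u)) (fderiv ℝ f (x + t • u) u) t := by
  have hline : HasDerivAt (fun s : ℝ ↦ x + s • u) u t := by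
    simpa using ((hasDerivAt_id t).smul_const u).const_add x
  exact (hf _).hasFDerivAt.comp_hasDerivAt t hline

variable {V : E → ℝ}

theorem ContDiff.hasDerivAt_fderiv_apply_add_smul (hV : ContDiff ℝ 2 V) (x u : E) (t : ℝ) :
    HasDerivAt (fun s : ℝ ↦ fderiv ℝ V (x + s • u) u)
      (fderiv ℝ (fderiv ℝ V) (x + t • u) u u) t :=
  (ContinuousLinearMap.apply ℝ ℝ u).hasFDerivAt.comp_hasDerivAt t
    (hasDerivAt_apply_add_smul ((hV.fderiv_right le_rfl).differentiable one_ne_zero) x u t)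

theorem ContDiff.apply_add_le_of_fderiv_fderiv_le (hV : ContDiff ℝ 2 V) (x u : E) {C : ℝ}
    (hC : ∀ y, fderiv ℝ (fderiv ℝ V) y u u ≤ C) :
    V (x + u) ≤ V x + fderiv ℝ V x u + C / 2 := by
  simpa using le_add_deriv_add_half_of_deriv_le
    (hasDerivAt_apply_add_smul (hV.differentiable two_ne_zero) x u)
    (hV.hasDerivAt_fderiv_apply_add_smul x u) fun t ↦ hC _

theorem ContDiff.le_apply_add_of_le_fderiv_fderiv (hV : ContDiff ℝ 2 V) (x u : E) {C : ℝ}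
    (hC : ∀ y, C ≤ fderiv ℝ (fderiv ℝ V) y u u) :
    V x + fderiv ℝ V x u + C / 2 ≤ V (x + u) := by
  have := le_add_deriv_add_half_of_deriv_le
    (fun t ↦ (hasDerivAt_apply_add_smul (hV.differentiable two_ne_zero) x u t).neg)
    (fun t ↦ (hV.hasDerivAt_fderiv_apply_add_smul x u t).neg) fun t ↦ neg_le_neg (hC _)
  simp only [Pi.neg_apply, one_smul, zero_smul, add_zero] at this
  linarith

theorem ContDiff.fderiv_apply_sq_le (hV : ContDiff ℝ 2 V) (hV0 : ∀ x, 0 ≤ V x) {L : ℝ}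
    (hL : ∀ y u, fderiv ℝ (fderiv ℝ V) y u u ≤ L * ‖u‖ ^ 2) (x u : E) :
    fderiv ℝ V x u ^ 2 ≤ 2 * L * ‖u‖ ^ 2 * V x := by
  -- `0 ≤ V (x + s • u)` is bounded by a quadratic in `s`, whose discriminant is then `≤ 0`.
  have hquad : ∀ s : ℝ, 0 ≤ L * ‖u‖ ^ 2 / 2 * (s * s) + fderiv ℝ V x u * s + V x := fun s ↦ by
    have := hV.apply_add_le_of_fderiv_fderiv_le x (s • u) fun y ↦ hL y (s • u)
    simp only [map_smul, smul_eq_mul, norm_smul, Real.norm_eq_abs, mul_pow, sq_abs] at this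
    nlinarith [hV0 (x + s • u)]
  have := discrim_le_zero hquad
  rw [discrim] at this
  linarith

end Taylor

theorem exists_pos_mul_one_add_norm_sq_le {E : Type*} [NormedAddCommGroup E] [ProperSpace E]
    {f : E → ℝ} (hf : Continuous f) (hpos : ∀ x, 0 < f x) {a b : ℝ} (ha : 0 < a)
    (hab : ∀ x, a * ‖x‖ ^ 2 - b * ‖x‖ ≤ f x) :
    ∃ c > 0, ∀ x, c * (1 + ‖x‖) ^ 2 ≤ f x := by
  set R := max 1 (2 * b / a)
  obtain ⟨z, -, hz⟩ := (isCompact_closedBall (0 : E) R).exists_isMinOn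
    ⟨0, Metric.mem_closedBall_self (zero_le_one.trans (le_max_left _ _))⟩ hf.continuousOn
  have hz₀ := hpos z
  have hR : 0 < (1 + R) ^ 2 := by positivity
  refine ⟨min (a / 8) (f z / (1 + R) ^ 2), lt_min (by positivity) (by positivity), fun x ↦ ?_⟩
  rcases le_or_gt ‖x‖ R with hx | hx
  · calc min (a / 8) (f z / (1 + R) ^ 2) * (1 + ‖x‖) ^ 2 ≤ f z / (1 + R) ^ 2 * (1 + R) ^ 2 := by
          gcongr
          exact min_le_right _ _
      _ = f z := div_mul_cancel₀ _ hR.ne'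
      _ ≤ f x := hz (by simpa using hx)
  · have h1 : 1 ≤ ‖x‖ := (le_max_left _ _).trans hx.le
    have hb : 2 * b ≤ a * ‖x‖ := (div_le_iff₀' ha).1 ((le_max_right _ _).trans hx.le)
    calc min (a / 8) (f z / (1 + R) ^ 2) * (1 + ‖x‖) ^ 2 ≤ a / 8 * (1 + ‖x‖) ^ 2 := by
          gcongr; exact min_le_left _ _
      _ ≤ a * ‖x‖ ^ 2 - b * ‖x‖ := by
          have h4 : (1 + ‖x‖) ^ 2 ≤ 4 * ‖x‖ ^ 2 := by nlinarith
          nlinarith [mul_le_mul_of_nonneg_right hb (norm_nonneg x)]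
      _ ≤ f x := hab x

section Growth

variable {E : Type*} [NormedAddCommGroup E] [NormedSpace ℝ E]

theorem integrable_rpow_neg_of_mul_one_add_norm_sq_le [MeasurableSpace E] [BorelSpace E]
    [FiniteDimensional ℝ E] (μ : Measure E) [μ.IsAddHaarMeasure] {f : E → ℝ} (hf : Measurable f)
    {c : ℝ} (hc : 0 < c) (hfc : ∀ x, c * (1 + ‖x‖) ^ 2 ≤ f x) {γ : ℝ}
    (hγ : Module.finrank ℝ E < 2 * γ) :
    Integrable (fun x ↦ f x ^ (-γ)) μ := by
  have hγ0 : 0 ≤ γ := by have := (Module.finrank ℝ E).cast_nonneg (α := ℝ); linarith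
  refine ((integrable_one_add_norm hγ).const_mul (c ^ (-γ))).mono'
    (hf.pow_const _).aestronglyMeasurable (ae_of_all _ fun x ↦ ?_)
  have hx : 0 < c * (1 + ‖x‖) ^ 2 := by positivity
  rw [Real.norm_eq_abs, abs_of_nonneg (rpow_nonneg (hx.le.trans (hfc x)) _)]
  calc f x ^ (-γ) ≤ (c * (1 + ‖x‖) ^ 2) ^ (-γ) := rpow_le_rpow_of_nonpos hx (hfc x) (by linarith)
    _ = c ^ (-γ) * (1 + ‖x‖) ^ (-(2 * γ)) := by
      rw [mul_rpow hc.le (by positivity), ← rpow_natCast, ← rpow_mul (by positivity)]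
      push_cast; ring_nf

variable {V : E → ℝ}

theorem ContDiff.exists_pos_mul_one_add_norm_sq_le [ProperSpace E] (hV : ContDiff ℝ 2 V)
    (hVpos : ∀ x, 0 < V x) {α : ℝ} (hα : 0 < α)
    (hlower : ∀ y u, α * ‖u‖ ^ 2 ≤ fderiv ℝ (fderiv ℝ V) y u u) :
    ∃ c > 0, ∀ x, c * (1 + ‖x‖) ^ 2 ≤ V x := by
  refine _root_.exists_pos_mul_one_add_norm_sq_le hV.continuous hVpos (half_pos hα)
    (b := ‖fderiv ℝ V 0‖) fun x ↦ ?_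
  have hTaylor := hV.le_apply_add_of_le_fderiv_fderiv 0 x fun y ↦ hlower y x
  rw [zero_add] at hTaylor
  have hDV := (fderiv ℝ V 0).le_opNorm x
  rw [Real.norm_eq_abs] at hDV
  nlinarith [hVpos 0, neg_abs_le (fderiv ℝ V 0 x)]

end Growth

theorem mul_rpow_neg_add_one {x : ℝ} (hx : 0 < x) (p : ℝ) : x * x ^ (-(p + 1)) = x ^ (-p) := by
  rw [mul_comm, ← rpow_add_one hx.ne']
  ring_nf

section IntegrationByParts

variable {E : Type*} [NormedAddCommGroup E] [NormedSpace ℝ E] {V : E → ℝ} {p : ℝ}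

theorem ContDiff.hasLineDerivAt_fderiv_apply_mul_rpow (hV : ContDiff ℝ 2 V)
    (hVpos : ∀ x, 0 < V x) (x v : E) :
    HasLineDerivAt ℝ (fun y ↦ fderiv ℝ V y v * V y ^ (-p))
      (fderiv ℝ (fderiv ℝ V) x v v * V x ^ (-p) - p * (fderiv ℝ V x v ^ 2 * V x ^ (-(p + 1))))
      x v := by
  have hDV : HasFDerivAt (fun y ↦ fderiv ℝ V y v)
      ((ContinuousLinearMap.apply ℝ ℝ v).comp (fderiv ℝ (fderiv ℝ V) x)) x :=
    (ContinuousLinearMap.apply ℝ ℝ v).hasFDerivAt.comp x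
      (((hV.fderiv_right le_rfl).differentiable one_ne_zero) x).hasFDerivAt
  have hVp : HasFDerivAt (fun y ↦ V y ^ (-p)) ((-p * V x ^ (-p - 1)) • fderiv ℝ V x) x :=
    (hasDerivAt_rpow_const (Or.inl (hVpos x).ne')).comp_hasFDerivAt x
      ((hV.differentiable two_ne_zero) x).hasFDerivAt
  refine ((hDV.mul hVp).hasLineDerivAt v).congr_deriv ?_
  simp only [_root_.add_apply, _root_.smul_apply, ContinuousLinearMap.comp_apply,
    ContinuousLinearMap.apply_apply, smul_eq_mul, show -p - 1 = -(p + 1) by ring]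
  ring

theorem tendsto_fderiv_apply_mul_rpow_cocompact [ProperSpace E] (hVpos : ∀ x, 0 < V x)
    {c K : ℝ} (hc : 0 < c) (hgrowth : ∀ x, c * (1 + ‖x‖) ^ 2 ≤ V x) {v : E}
    (hgrad : ∀ y, fderiv ℝ V y v ^ 2 ≤ K * V y) (hp : 1 / 2 < p) :
    Tendsto (fun x ↦ fderiv ℝ V x v * V x ^ (-p)) (cocompact E) (𝓝 0) := by
  have hV : Tendsto V (cocompact E) atTop :=
    tendsto_atTop_mono (fun x ↦ (mul_le_mul_of_nonneg_left
        (by nlinarith [norm_nonneg x] : ‖x‖ ≤ (1 + ‖x‖) ^ 2) hc.le).trans (hgrowth x))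
      (tendsto_norm_cocompact_atTop.const_mul_atTop hc)
  have hbound : ∀ x, |fderiv ℝ V x v * V x ^ (-p)| ≤ √(K * V x ^ (-(2 * p - 1))) := fun x ↦ by
    have hx := hVpos x
    refine abs_le_sqrt ?_
    calc (fderiv ℝ V x v * V x ^ (-p)) ^ 2 = fderiv ℝ V x v ^ 2 * V x ^ (-(2 * p)) := by
          rw [mul_pow, ← rpow_natCast (V x ^ (-p)), ← rpow_mul hx.le]
          ring_nf
      _ ≤ K * V x * V x ^ (-(2 * p)) := by
          gcongr
          exact hgrad x
      _ = K * V x ^ (-(2 * p - 1)) := by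
          rw [mul_assoc, ← mul_rpow_neg_add_one hx (2 * p - 1), sub_add_cancel]
  have hlim : Tendsto (fun x ↦ √(K * V x ^ (-(2 * p - 1)))) (cocompact E) (𝓝 0) := by
    have h := (((tendsto_rpow_neg_atTop (by linarith : 0 < 2 * p - 1)).comp hV).const_mul K).sqrt
    rwa [mul_zero, sqrt_zero] at h
  exact squeeze_zero_norm (fun x ↦ hbound x) hlim

variable [MeasurableSpace E] [BorelSpace E] [FiniteDimensional ℝ E] (μ : Measure E)
  [μ.IsAddHaarMeasure] {c K M : ℝ}

theorem ContDiff.integrable_fderiv_fderiv_mul_rpow (hV : ContDiff ℝ 2 V) (hVpos : ∀ x, 0 < V x)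
    (hc : 0 < c) (hgrowth : ∀ x, c * (1 + ‖x‖) ^ 2 ≤ V x) {v : E}
    (hH : ∀ y, |fderiv ℝ (fderiv ℝ V) y v v| ≤ M) (hp : Module.finrank ℝ E < 2 * p) :
    Integrable (fun x ↦ fderiv ℝ (fderiv ℝ V) x v v * V x ^ (-p)) μ := by
  have hcont : Continuous fun x ↦ fderiv ℝ (fderiv ℝ V) x v v :=
    (((hV.fderiv_right le_rfl).continuous_fderiv one_ne_zero).clm_apply continuous_const).clm_apply
      continuous_const
  refine ((integrable_rpow_neg_of_mul_one_add_norm_sq_le μ hV.continuous.measurable hc hgrowth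
    hp).const_mul M).mono'
    (hcont.aestronglyMeasurable.mul (hV.continuous.measurable.pow_const _).aestronglyMeasurable)
    (ae_of_all _ fun x ↦ ?_)
  have hVp := rpow_nonneg (hVpos x).le (-p)
  rw [norm_mul, Real.norm_eq_abs, Real.norm_eq_abs, abs_of_nonneg hVp]
  exact mul_le_mul_of_nonneg_right (hH x) hVp

theorem ContDiff.integrable_fderiv_apply_sq_mul_rpow (hV : ContDiff ℝ 2 V) (hVpos : ∀ x, 0 < V x)
    (hc : 0 < c) (hgrowth : ∀ x, c * (1 + ‖x‖) ^ 2 ≤ V x) {v : E}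
    (hgrad : ∀ y, fderiv ℝ V y v ^ 2 ≤ K * V y) (hp : Module.finrank ℝ E < 2 * p) :
    Integrable (fun x ↦ fderiv ℝ V x v ^ 2 * V x ^ (-(p + 1))) μ := by
  have hcont : Continuous fun x ↦ fderiv ℝ V x v :=
    (hV.continuous_fderiv (by norm_num)).clm_apply continuous_const
  refine ((integrable_rpow_neg_of_mul_one_add_norm_sq_le μ hV.continuous.measurable hc hgrowth
    hp).const_mul K).mono'
    ((hcont.pow 2).aestronglyMeasurable.mul
      (hV.continuous.measurable.pow_const _).aestronglyMeasurable)
    (ae_of_all _ fun x ↦ ?_)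
  have hVp := rpow_nonneg (hVpos x).le (-(p + 1))
  rw [norm_mul, Real.norm_eq_abs, Real.norm_eq_abs, abs_of_nonneg hVp, abs_of_nonneg (sq_nonneg _)]
  calc fderiv ℝ V x v ^ 2 * V x ^ (-(p + 1)) ≤ K * V x * V x ^ (-(p + 1)) := by
        gcongr; exact hgrad x
    _ = K * V x ^ (-p) := by rw [mul_assoc, mul_rpow_neg_add_one (hVpos x)]

theorem ContDiff.integral_fderiv_fderiv_mul_rpow_eq (hV : ContDiff ℝ 2 V) (hVpos : ∀ x, 0 < V x)
    (hc : 0 < c) (hgrowth : ∀ x, c * (1 + ‖x‖) ^ 2 ≤ V x) {v : E}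
    (hgrad : ∀ y, fderiv ℝ V y v ^ 2 ≤ K * V y) (hH : ∀ y, |fderiv ℝ (fderiv ℝ V) y v v| ≤ M)
    (hp : Module.finrank ℝ E < 2 * p) :
    ∫ x, fderiv ℝ (fderiv ℝ V) x v v * V x ^ (-p) ∂μ
      = p * ∫ x, fderiv ℝ V x v ^ 2 * V x ^ (-(p + 1)) ∂μ := by
  rcases eq_or_ne v 0 with rfl | hv
  · simp
  have : Nontrivial E := nontrivial_iff.2 ⟨v, 0, hv⟩
  have hp' : 1 / 2 < p := by
    have : (1 : ℝ) ≤ Module.finrank ℝ E := by exact_mod_cast Module.finrank_pos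
    linarith
  have hI₁ := hV.integrable_fderiv_fderiv_mul_rpow μ hVpos hc hgrowth hH hp
  have hI₂ := (hV.integrable_fderiv_apply_sq_mul_rpow μ hVpos hc hgrowth hgrad hp).const_mul p
  have hzero := integral_eq_zero_of_hasLineDerivAt_of_tendsto_cocompact μ
    (hV.hasLineDerivAt_fderiv_apply_mul_rpow hVpos · v) (hI₁.sub hI₂)
    (tendsto_fderiv_apply_mul_rpow_cocompact hVpos hc hgrowth hgrad hp')
  rwa [integral_sub hI₁ hI₂, integral_const_mul, sub_eq_zero] at hzero

end IntegrationByParts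

section Laplacian

variable {E : Type*} [NormedAddCommGroup E] [InnerProductSpace ℝ E] [FiniteDimensional ℝ E]
  {V : E → ℝ}

theorem laplacian_eq_sum_fderiv_fderiv {ι : Type*} [Fintype ι] (b : OrthonormalBasis ι ℝ E)
    (V : E → ℝ) (x : E) :
    Δ V x = ∑ i, fderiv ℝ (fderiv ℝ V) x (b i) (b i) := by
  simp [laplacian_eq_iteratedFDeriv_orthonormalBasis V b, iteratedFDeriv_two_apply]

theorem norm_gradient_sq_eq_sum {ι : Type*} [Fintype ι] (b : OrthonormalBasis ι ℝ E) (x : E) :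
    ‖gradient V x‖ ^ 2 = ∑ i, fderiv ℝ V x (b i) ^ 2 := by
  simp_rw [← b.sum_sq_inner_left, gradient, toDual_symm_apply]

variable [MeasurableSpace E] [BorelSpace E] (μ : Measure E) [μ.IsAddHaarMeasure] {c K M p : ℝ}

theorem ContDiff.integrable_laplacian_mul_rpow (hV : ContDiff ℝ 2 V) (hVpos : ∀ x, 0 < V x)
    (hc : 0 < c) (hgrowth : ∀ x, c * (1 + ‖x‖) ^ 2 ≤ V x)
    (hH : ∀ y u, |fderiv ℝ (fderiv ℝ V) y u u| ≤ M * ‖u‖ ^ 2)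
    (hp : Module.finrank ℝ E < 2 * p) :
    Integrable (fun x ↦ Δ V x * V x ^ (-p)) μ := by
  simp_rw [laplacian_eq_sum_fderiv_fderiv (stdOrthonormalBasis ℝ E), Finset.sum_mul]
  exact integrable_finsetSum _ fun i _ ↦
    hV.integrable_fderiv_fderiv_mul_rpow μ hVpos hc hgrowth (fun y ↦ hH y _) hp

theorem ContDiff.integral_laplacian_mul_rpow_eq (hV : ContDiff ℝ 2 V) (hVpos : ∀ x, 0 < V x)
    (hc : 0 < c) (hgrowth : ∀ x, c * (1 + ‖x‖) ^ 2 ≤ V x)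
    (hgrad : ∀ y u, fderiv ℝ V y u ^ 2 ≤ K * ‖u‖ ^ 2 * V y)
    (hH : ∀ y u, |fderiv ℝ (fderiv ℝ V) y u u| ≤ M * ‖u‖ ^ 2)
    (hp : Module.finrank ℝ E < 2 * p) :
    ∫ x, Δ V x * V x ^ (-p) ∂μ = p * ∫ x, ‖gradient V x‖ ^ 2 * V x ^ (-(p + 1)) ∂μ := by
  set b := stdOrthonormalBasis ℝ E
  have hgrad' (i) : ∀ y, fderiv ℝ V y (b i) ^ 2 ≤ K * ‖b i‖ ^ 2 * V y := fun y ↦ hgrad y (b i)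
  calc ∫ x, Δ V x * V x ^ (-p) ∂μ
      = ∑ i, ∫ x, fderiv ℝ (fderiv ℝ V) x (b i) (b i) * V x ^ (-p) ∂μ := by
        simp_rw [laplacian_eq_sum_fderiv_fderiv b, Finset.sum_mul]
        exact integral_finsetSum _ fun i _ ↦
          hV.integrable_fderiv_fderiv_mul_rpow μ hVpos hc hgrowth (fun y ↦ hH y _) hp
    _ = ∑ i, p * ∫ x, fderiv ℝ V x (b i) ^ 2 * V x ^ (-(p + 1)) ∂μ :=
        Finset.sum_congr rfl fun i _ ↦ hV.integral_fderiv_fderiv_mul_rpow_eq μ hVpos hc hgrowth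
          (hgrad' i) (fun y ↦ hH y _) hp
    _ = p * ∫ x, ‖gradient V x‖ ^ 2 * V x ^ (-(p + 1)) ∂μ := by
        simp_rw [← Finset.mul_sum, norm_gradient_sq_eq_sum b, Finset.sum_mul]
        rw [integral_finsetSum _ fun i _ ↦
          hV.integrable_fderiv_apply_sq_mul_rpow μ hVpos hc hgrowth (hgrad' i) hp]

theorem ContDiff.integral_laplacian_mul_rpow_le (hV : ContDiff ℝ 2 V) (hVpos : ∀ x, 0 < V x)
    (hc : 0 < c) (hgrowth : ∀ x, c * (1 + ‖x‖) ^ 2 ≤ V x)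
    (hH : ∀ y u, |fderiv ℝ (fderiv ℝ V) y u u| ≤ M * ‖u‖ ^ 2)
    (hp : Module.finrank ℝ E < 2 * p) {B : ℝ} (hΔ : ∀ x, Δ V x ≤ B) :
    ∫ x, Δ V x * V x ^ (-p) ∂μ ≤ B * ∫ x, V x ^ (-p) ∂μ := by
  rw [← integral_const_mul]
  exact integral_mono (hV.integrable_laplacian_mul_rpow μ hVpos hc hgrowth hH hp)
    ((integrable_rpow_neg_of_mul_one_add_norm_sq_le μ hV.continuous.measurable hc hgrowth
      hp).const_mul B)
    fun x ↦ mul_le_mul_of_nonneg_right (hΔ x) (rpow_nonneg (hVpos x).le _)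

end Laplacian

section HessianMatrix

variable {d : ℕ} {V : EuclideanSpace ℝ (Fin d) → ℝ} {x : EuclideanSpace ℝ (Fin d)}

theorem dotProduct_hessianMatrix_mulVec (u : EuclideanSpace ℝ (Fin d)) :
    u ⬝ᵥ (hessianMatrix V x *ᵥ u) = fderiv ℝ (fderiv ℝ V) x u u := by
  have hu : u = ∑ i, u i • EuclideanSpace.single i (1 : ℝ) := by
    simpa using ((EuclideanSpace.basisFun (Fin d) ℝ).sum_repr u).symm
  conv_rhs => rw [hu]
  simp only [dotProduct, mulVec, hessianMatrix, iteratedFDeriv_two_apply, Fin.isValue,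
    cons_val_zero, cons_val_one, cons_val_fin_one, of_apply, Finset.mul_sum, map_sum, map_smul,
    _root_.sum_apply, _root_.smul_apply, smul_eq_mul]
  exact Finset.sum_comm.trans
    (Finset.sum_congr rfl fun _ _ ↦ Finset.sum_congr rfl fun _ _ ↦ by ring)

theorem dotProduct_self_eq_norm_sq (u : EuclideanSpace ℝ (Fin d)) : u ⬝ᵥ u = ‖u‖ ^ 2 := by
  rw [← real_inner_self_eq_norm_sq, EuclideanSpace.inner_eq_star_dotProduct, star_trivial]

theorem Matrix.PosSemidef.mul_norm_sq_le_fderiv_fderiv {α : ℝ}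
    (h : (hessianMatrix V x - α • 1).PosSemidef) (u : EuclideanSpace ℝ (Fin d)) :
    α * ‖u‖ ^ 2 ≤ fderiv ℝ (fderiv ℝ V) x u u := by
  have := h.dotProduct_mulVec_nonneg u
  rwa [star_trivial, sub_mulVec, dotProduct_sub, dotProduct_hessianMatrix_mulVec, smul_mulVec,
    one_mulVec, dotProduct_smul, dotProduct_self_eq_norm_sq, smul_eq_mul, sub_nonneg] at this

theorem Matrix.PosSemidef.fderiv_fderiv_le_mul_norm_sq {L : ℝ}
    (h : (L • 1 - hessianMatrix V x).PosSemidef) (u : EuclideanSpace ℝ (Fin d)) :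
    fderiv ℝ (fderiv ℝ V) x u u ≤ L * ‖u‖ ^ 2 := by
  have := h.dotProduct_mulVec_nonneg u
  rwa [star_trivial, sub_mulVec, dotProduct_sub, dotProduct_hessianMatrix_mulVec, smul_mulVec,
    one_mulVec, dotProduct_smul, dotProduct_self_eq_norm_sq, smul_eq_mul, sub_nonneg] at this

theorem trace_hessianMatrix (V : EuclideanSpace ℝ (Fin d) → ℝ) (x : EuclideanSpace ℝ (Fin d)) :
    (hessianMatrix V x).trace = Δ V x := by
  simp [Matrix.trace, hessianMatrix,
    laplacian_eq_iteratedFDeriv_orthonormalBasis V (EuclideanSpace.basisFun (Fin d) ℝ)]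

end HessianMatrix

theorem gradient_moment_identity_and_bound_general
    (d : ℕ) (β : ℝ) (hβ : (d : ℝ) / 2 + 1 < β)
    (V : EuclideanSpace ℝ (Fin d) → ℝ)
    (hV : ContDiff ℝ 2 V) (hVpos : ∀ x, 0 < V x)
    (α L : ℝ) (hα : 0 < α) (hL : 0 < L)
    (hstrong : ∀ x, (hessianMatrix V x - α • 1).PosSemidef)
    (hlip : ∀ x, ((L • 1 : Matrix (Fin d) (Fin d) ℝ) - hessianMatrix V x).PosSemidef)
    (Zβ : ℝ) (hZβ : Zβ = ∫ x, V x ^ (-β))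
    (πβ : EuclideanSpace ℝ (Fin d) → ℝ)
    (hπβ : ∀ x, πβ x = Zβ⁻¹ * V x ^ (-β)) :
    (∫ x, ‖gradient V x‖ ^ 2 * V x ^ (-β))
        = (β - 1)⁻¹ * ∫ x, (hessianMatrix V x).trace * V x ^ (-(β - 1)) ∧
    (∫ x, ‖gradient V x‖ ^ 2 * πβ x)
        ≤ ((d : ℝ) * L / (β - 1)) * ∫ x, V x * πβ x := by
  have hlower y u := (hstrong y).mul_norm_sq_le_fderiv_fderiv u
  have hupper y u := (hlip y).fderiv_fderiv_le_mul_norm_sq u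
  have hH : ∀ y u, |fderiv ℝ (fderiv ℝ V) y u u| ≤ L * ‖u‖ ^ 2 := fun y u ↦
    abs_le.2 ⟨by nlinarith [hlower y u, sq_nonneg ‖u‖], hupper y u⟩
  obtain ⟨c, hc, hgrowth⟩ := hV.exists_pos_mul_one_add_norm_sq_le hVpos hα hlower
  have hp : (Module.finrank ℝ (EuclideanSpace ℝ (Fin d)) : ℝ) < 2 * (β - 1) := by
    rw [finrank_euclideanSpace_fin]; linarith
  have hβ₁ : 0 < β - 1 := by linarith
  simp_rw [trace_hessianMatrix]
  have hidentity : ∫ x, ‖gradient V x‖ ^ 2 * V x ^ (-β)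
      = (β - 1)⁻¹ * ∫ x, Δ V x * V x ^ (-(β - 1)) := by
    rw [hV.integral_laplacian_mul_rpow_eq volume hVpos hc hgrowth
      (hV.fderiv_apply_sq_le (fun x ↦ (hVpos x).le) hupper) hH hp, sub_add_cancel,
      inv_mul_cancel_left₀ hβ₁.ne']
  refine ⟨hidentity, ?_⟩
  have hZ : 0 ≤ Zβ⁻¹ := inv_nonneg.2 (hZβ ▸ integral_nonneg fun x ↦ rpow_nonneg (hVpos x).le _)
  have hΔ x : Δ V x ≤ d * L := by
    simpa [← trace_hessianMatrix, trace_sub, trace_smul, mul_comm] using (hlip x).trace_nonneg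
  have hVπ x : V x * πβ x = Zβ⁻¹ * V x ^ (-(β - 1)) := by
    rw [hπβ, mul_left_comm, ← mul_rpow_neg_add_one (hVpos x) (β - 1), sub_add_cancel]
  calc ∫ x, ‖gradient V x‖ ^ 2 * πβ x
      = Zβ⁻¹ * ((β - 1)⁻¹ * ∫ x, Δ V x * V x ^ (-(β - 1))) := by
        simp_rw [hπβ, mul_left_comm _ Zβ⁻¹, integral_const_mul, hidentity]
    _ ≤ Zβ⁻¹ * ((β - 1)⁻¹ * (d * L * ∫ x, V x ^ (-(β - 1)))) := by
        gcongr
        exact hV.integral_laplacian_mul_rpow_le volume hVpos hc hgrowth hH hp hΔ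
    _ = (d * L / (β - 1)) * ∫ x, V x * πβ x := by
        simp_rw [hVπ, integral_const_mul]
        ring

/-- For `β > d/2 + 1` and `V` positive, `α`-strongly convex and `L`-gradient
Lipschitz: `∫ |∇V|² V^{-β} = (β−1)⁻¹ ∫ ΔV · V^{−(β−1)}`, and consequently
`∫ |∇V|² dπ_β ≤ (dL/(β−1)) ∫ V dπ_β`. -/
theorem gradient_moment_identity_and_bound
    (d : ℕ) (hd : 1 ≤ d) (β : ℝ) (hβ : (d : ℝ) / 2 + 1 < β)
    (V : EuclideanSpace ℝ (Fin d) → ℝ)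
    (hV : ContDiff ℝ 2 V) (hVpos : ∀ x, 0 < V x)
    (α L : ℝ) (hα : 0 < α) (hL : 0 < L)
    (hstrong : ∀ x, (hessianMatrix V x - α • 1).PosSemidef)
    (hlip : ∀ x, ((L • 1 : Matrix (Fin d) (Fin d) ℝ) - hessianMatrix V x).PosSemidef)
    (Zβ : ℝ) (hZβ : Zβ = ∫ x, V x ^ (-β))
    (πβ : EuclideanSpace ℝ (Fin d) → ℝ)
    (hπβ : ∀ x, πβ x = Zβ⁻¹ * V x ^ (-β)) :
    (∫ x, ‖gradient V x‖ ^ 2 * V x ^ (-β))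
        = (β - 1)⁻¹ * ∫ x, (hessianMatrix V x).trace * V x ^ (-(β - 1)) ∧
    (∫ x, ‖gradient V x‖ ^ 2 * πβ x)
        ≤ ((d : ℝ) * L / (β - 1)) * ∫ x, V x * πβ x :=
  gradient_moment_identity_and_bound_general d β hβ V hV hVpos α L hα hL hstrong hlip Zβ hZβ πβ hπβ
end
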